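/- arXiv:2402.12269 — 3 statements merged into one kernel-verified Lean document; each statement's English description precedes it below -/
import Mathlib

section
/- The Birkhoff polytope of doubly stochastic m×m matrices is the convex hull of the set of m×m permutation matrices. -/
/-! The theorem is Mathlib's Birkhoff–von Neumann theorem
`doublyStochastic_eq_convexHull_permMatrix`, once a matrix satisfying `IsPermMatrix` is recognised
as the matrix of the permutation sending each row to the column of its unique `1`. -/

/-- The set of doubly stochastic m×m real matrices. -/
def DS (m : ℕ) : Set (Matrix (Fin m) (Fin m) ℝ) :=
  {T | (∀ i j, 0 ≤ T i j) ∧ (∀ i, ∑ j, T i j = 1) ∧ (∀ j, ∑ i, T i j = 1)}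

/-- A permutation matrix: a 0/1 matrix with exactly one 1 in each row and column. -/
def IsPermMatrix {m : ℕ} (P : Matrix (Fin m) (Fin m) ℝ) : Prop :=
  (∀ i j, P i j = 0 ∨ P i j = 1) ∧ (∀ i, ∃! j, P i j = 1) ∧ (∀ j, ∃! i, P i j = 1)

open Equiv

section PermMatrix

variable {n R : Type*} [DecidableEq n] [Zero R] [One R]

lemma Equiv.Perm.permMatrix_apply (σ : Perm n) (i j : n) :
    σ.permMatrix R i j = if σ i = j then 1 else 0 := by
  simp [Perm.permMatrix, PEquiv.toMatrix_apply]

lemma Equiv.Perm.permMatrix_apply_eq_one_iff [NeZero (1 : R)] (σ : Perm n) (i j : n) :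
    σ.permMatrix R i j = 1 ↔ σ i = j := by
  rw [permMatrix_apply]
  split_ifs with h <;> simp [h]

end PermMatrix

lemma isPermMatrix_permMatrix {m : ℕ} (σ : Perm (Fin m)) : IsPermMatrix (σ.permMatrix ℝ) := by
  refine ⟨fun i j => ?_, fun i => ?_, fun j => ?_⟩
  · rw [Perm.permMatrix_apply]
    split_ifs <;> simp
  · simpa only [Perm.permMatrix_apply_eq_one_iff] using existsUnique_eq'
  · simpa only [Perm.permMatrix_apply_eq_one_iff, ← eq_symm_apply] using existsUnique_eq

lemma IsPermMatrix.exists_permMatrix_eq {m : ℕ} {P : Matrix (Fin m) (Fin m) ℝ}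
    (hP : IsPermMatrix P) : ∃ σ : Perm (Fin m), σ.permMatrix ℝ = P := by
  obtain ⟨h01, hrow, hcol⟩ := hP
  choose f hf hf_unique using hrow
  have hinj : Function.Injective f := fun a b hab => (hcol (f a)).unique (hf a) (hab ▸ hf b)
  refine ⟨ofBijective f hinj.bijective_of_finite, Matrix.ext fun i j => ?_⟩
  rw [Perm.permMatrix_apply, ofBijective_apply]
  split_ifs with h
  · exact (h ▸ hf i).symm
  · exact ((h01 i j).resolve_right fun h1 => h (hf_unique i j h1).symm).symm

lemma setOf_isPermMatrix (m : ℕ) :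
    {P : Matrix (Fin m) (Fin m) ℝ | IsPermMatrix P} =
      Set.range fun σ : Perm (Fin m) => σ.permMatrix ℝ := by
  ext P
  exact ⟨IsPermMatrix.exists_permMatrix_eq, by rintro ⟨σ, rfl⟩; exact isPermMatrix_permMatrix σ⟩

lemma DS_eq_doublyStochastic (m : ℕ) : DS m = doublyStochastic ℝ (Fin m) := by
  ext T
  rw [SetLike.mem_coe, mem_doublyStochastic_iff_sum]
  rfl

/-- The Birkhoff polytope of doubly stochastic m×m matrices is the convex hull of the
set of m×m permutation matrices. -/
theorem birkhoff_polytope (m : ℕ) :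
    convexHull ℝ {P : Matrix (Fin m) (Fin m) ℝ | IsPermMatrix P} = DS m := by
  rw [setOf_isPermMatrix, DS_eq_doublyStochastic, doublyStochastic_eq_convexHull_permMatrix]
  rfl
end

section
/- For ground losses decomposable as ℓ(a,b) = f₁(a) + f₂(b) − h₁(a)h₂(b), the masked tensor product (L⊗T)_{i,i'} = Σ_{j,j'} T_{j,j'} ℓ(A_{i,j}, A'_{i',j'}) W_{i,j} W'_{i',j'} equals U₁ T W'ᵀ + W T U₂ᵀ − V₁ T V₂ᵀ, where U₁ = f₁(A)∘W, U₂ = f₂(A')∘W', V₁ = h₁(A)∘W, V₂ = h₂(A')∘W' and ∘ denotes entrywise multiplication. -/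
/-!
The masked tensor product is linear in the ground loss, and for a product loss `g a * k b` the
double sum factors as `(g(A)∘W) * T * (k(A')∘W')ᵀ`. The decomposition of `ℓ` writes it as a
combination of three such products, with `k = 1` and `g = 1` in the first two.
-/

open Finset

namespace Matrix

variable {m m' ι κ α β R : Type*} [Fintype ι] [Fintype κ] [CommRing R]

theorem mul_mul_transpose_apply (U : Matrix m ι R) (T : Matrix ι κ R) (V : Matrix m' κ R)
    (i : m) (i' : m') : (U * T * Vᵀ) i i' = ∑ j, ∑ j', U i j * T j j' * V i' j' := by
  simp only [mul_apply, transpose_apply, sum_mul]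
  exact sum_comm

def maskedTensorProduct (ℓ : α → β → R) (A : Matrix m ι α) (W : Matrix m ι R)
    (A' : Matrix m' κ β) (W' : Matrix m' κ R) (T : Matrix ι κ R) : Matrix m m' R :=
  of fun i i' => ∑ j, ∑ j', T j j' * ℓ (A i j) (A' i' j') * W i j * W' i' j'

variable (A : Matrix m ι α) (W : Matrix m ι R) (A' : Matrix m' κ β) (W' : Matrix m' κ R)
  (T : Matrix ι κ R)

theorem maskedTensorProduct_add (ℓ₁ ℓ₂ : α → β → R) :
    maskedTensorProduct (ℓ₁ + ℓ₂) A W A' W' T =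
      maskedTensorProduct ℓ₁ A W A' W' T + maskedTensorProduct ℓ₂ A W A' W' T := by
  ext i i'
  simp only [maskedTensorProduct, add_apply, of_apply, Pi.add_apply, mul_add, add_mul,
    sum_add_distrib]

theorem maskedTensorProduct_sub (ℓ₁ ℓ₂ : α → β → R) :
    maskedTensorProduct (ℓ₁ - ℓ₂) A W A' W' T =
      maskedTensorProduct ℓ₁ A W A' W' T - maskedTensorProduct ℓ₂ A W A' W' T := by
  ext i i'
  simp only [maskedTensorProduct, sub_apply, of_apply, Pi.sub_apply, mul_sub, sub_mul,
    sum_sub_distrib]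

theorem maskedTensorProduct_mul (g : α → R) (k : β → R) :
    maskedTensorProduct (fun a b => g a * k b) A W A' W' T =
      (of fun i j => g (A i j) * W i j) * T * (of fun i' j' => k (A' i' j') * W' i' j')ᵀ := by
  ext i i'
  rw [mul_mul_transpose_apply]
  refine sum_congr rfl fun j _ => sum_congr rfl fun j' _ => ?_
  simp only [of_apply]
  ring

end Matrix

open Matrix in
/-- For ground losses decomposable as `ℓ(a,b) = f₁ a + f₂ b − h₁ a * h₂ b`, the masked tensor
product `(L⊗T) i i' = ∑ j j', T j j' * ℓ (A i j) (A' i' j') * W i j * W' i' j'` equals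
`U₁ * T * W'ᵀ + W * T * U₂ᵀ − V₁ * T * V₂ᵀ` with `U₁ = f₁(A)∘W`, `U₂ = f₂(A')∘W'`,
`V₁ = h₁(A)∘W`, `V₂ = h₂(A')∘W'` (entrywise application and multiplication). -/
theorem masked_tensor_product_factorization {n m : ℕ}
    (T : Matrix (Fin n) (Fin m) ℝ)
    (A W : Matrix (Fin n) (Fin n) ℝ) (A' W' : Matrix (Fin m) (Fin m) ℝ)
    (ℓ : ℝ → ℝ → ℝ) (f₁ f₂ h₁ h₂ : ℝ → ℝ)
    (hdec : ∀ a b, ℓ a b = f₁ a + f₂ b - h₁ a * h₂ b) :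
    (Matrix.of fun i i' => ∑ j, ∑ j', T j j' * ℓ (A i j) (A' i' j') * W i j * W' i' j')
      = (Matrix.of fun i j => f₁ (A i j) * W i j) * T * W'.transpose
        + W * T * (Matrix.of fun i' j' => f₂ (A' i' j') * W' i' j').transpose
        - (Matrix.of fun i j => h₁ (A i j) * W i j) * T
            * (Matrix.of fun i' j' => h₂ (A' i' j') * W' i' j').transpose := by
  have hℓ : ℓ = (fun a _ => f₁ a * 1) + (fun _ b => 1 * f₂ b) - fun a b => h₁ a * h₂ b := by
    ext a b
    simp [hdec]
  change maskedTensorProduct ℓ A W A' W' T = _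
  rw [hℓ, maskedTensorProduct_sub, maskedTensorProduct_add, maskedTensorProduct_mul,
    maskedTensorProduct_mul, maskedTensorProduct_mul]
  simp only [one_mul]
  rfl
end

section
/- If P is a permutation matrix achieving zero PMFGW objective against a padded target (h, F, A) with positive ground losses, then Pᵀĥ = h, the first m rows of PᵀF̂ equal those of F, and the top-left m×m block of PᵀÂP equals that of A. -/
/-!
A permutation plan matches each prediction node `i` with exactly one target node `σ i`, so the
objective collapses to a sum of nonnegative losses between matched entries, weighted by the padding
mask `h`. A vanishing objective forces every loss of positive weight to vanish, i.e. the matched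
entries to agree, and the weights are `1` exactly on the first `m` target nodes.
-/

open Finset

def IsPositiveLoss {α : Type*} (ℓ : α → α → ℝ) : Prop :=
  ∀ x y, 0 ≤ ℓ x y ∧ (ℓ x y = 0 ↔ x = y)

namespace IsPositiveLoss

variable {α κ : Type*} [Fintype κ] {ℓ : α → α → ℝ} {x y : κ → α}

theorem sum_eq_zero_iff (hℓ : IsPositiveLoss ℓ) : ∑ k, ℓ (x k) (y k) = 0 ↔ x = y := by
  rw [Fintype.sum_eq_zero_iff_of_nonneg fun k => (hℓ _ _).1, funext_iff, funext_iff]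
  exact forall_congr' fun k => (hℓ _ _).2

variable {w : κ → ℝ}

theorem sum_mul_nonneg (hℓ : IsPositiveLoss ℓ) (hw : ∀ k, 0 ≤ w k) :
    0 ≤ ∑ k, ℓ (x k) (y k) * w k :=
  Fintype.sum_nonneg fun k => mul_nonneg (hℓ _ _).1 (hw k)

theorem eq_of_sum_mul_eq_zero (hℓ : IsPositiveLoss ℓ) (hw : ∀ k, 0 ≤ w k)
    (hsum : ∑ k, ℓ (x k) (y k) * w k = 0) {k : κ} (hk : w k ≠ 0) : x k = y k := by
  have hzero := (Fintype.sum_eq_zero_iff_of_nonneg fun k => mul_nonneg (hℓ _ _).1 (hw k)).1 hsum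
  exact (hℓ _ _).2.1 ((mul_eq_zero.1 (congrFun hzero k)).resolve_right hk)

end IsPositiveLoss

section PermutationPlan

variable {ι R : Type*} [Fintype ι] [DecidableEq ι] [Semiring R]
  {σ : Equiv.Perm ι} {P : Matrix ι ι R}

theorem sum_row_mul_of_perm (hP : ∀ i j, P i j = if σ i = j then 1 else 0) (i : ι) (g : ι → R) :
    ∑ j, P i j * g j = g (σ i) := by
  simp [hP, ite_mul]

theorem sum_col_mul_of_perm (hP : ∀ i j, P i j = if σ i = j then 1 else 0) (j : ι) (g : ι → R) :
    ∑ i, P i j * g i = g (σ.symm j) := by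
  simp [hP, ite_mul, ← Equiv.eq_symm_apply]

theorem sum_sum_mul_of_perm (hP : ∀ i j, P i j = if σ i = j then 1 else 0) (c : ι → ι → R) :
    ∑ i, ∑ j, P i j * c i j = ∑ i, c i (σ i) :=
  sum_congr rfl fun i _ => sum_row_mul_of_perm hP i (c i)

theorem sum_sum_sum_sum_mul_mul_of_perm (hP : ∀ i j, P i j = if σ i = j then 1 else 0)
    (c : ι → ι → ι → ι → R) :
    ∑ i, ∑ j, ∑ k, ∑ l, P i j * (P k l * c i j k l) = ∑ i, ∑ k, c i (σ i) k (σ k) := by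
  refine sum_congr rfl fun i _ => ?_
  simp_rw [← mul_sum, sum_sum_mul_of_perm hP]
  exact sum_row_mul_of_perm hP i _

theorem sum_sum_mul_mul_of_perm (hP : ∀ i j, P i j = if σ i = j then 1 else 0) (j l : ι)
    (B : Matrix ι ι R) : ∑ i, ∑ k, P i j * P k l * B i k = B (σ.symm j) (σ.symm l) := by
  simp_rw [mul_assoc, ← mul_sum, sum_col_mul_of_perm hP]

end PermutationPlan

theorem perm_zero_objective_recovers_target_general {M d m : ℕ}
    (ℓh : ℝ → ℝ → ℝ) (ℓF : (Fin d → ℝ) → (Fin d → ℝ) → ℝ) (ℓA : ℝ → ℝ → ℝ)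
    (hℓh : ∀ x y, 0 ≤ ℓh x y ∧ (ℓh x y = 0 ↔ x = y))
    (hℓF : ∀ x y, 0 ≤ ℓF x y ∧ (ℓF x y = 0 ↔ x = y))
    (hℓA : ∀ x y, 0 ≤ ℓA x y ∧ (ℓA x y = 0 ↔ x = y))
    -- prediction
    (hh : Fin M → ℝ) (FF : Fin M → Fin d → ℝ) (AA : Matrix (Fin M) (Fin M) ℝ)
    -- padded target
    (h : Fin M → ℝ) (F : Fin M → Fin d → ℝ) (A : Matrix (Fin M) (Fin M) ℝ)
    (hpad : ∀ j, h j = if (j : ℕ) < m then 1 else 0)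
    -- the permutation matrix
    (σ : Equiv.Perm (Fin M))
    (P : Matrix (Fin M) (Fin M) ℝ) (hP : ∀ i j, P i j = if σ i = j then 1 else 0)
    -- zero PMFGW objective at plan P
    (hobj : (∑ i, ∑ j, P i j * ℓh (hh i) (h j))
        + (∑ i, ∑ j, P i j * ℓF (FF i) (F j) * h j)
        + (∑ i, ∑ j, ∑ k, ∑ l, P i j * P k l * ℓA (AA i k) (A j l) * h j * h l) = 0) :
    (∀ j, ∑ i, P i j * hh i = h j) ∧
    (∀ j : Fin M, (j : ℕ) < m → ∀ t, ∑ i, P i j * FF i t = F j t) ∧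
    (∀ j l : Fin M, (j : ℕ) < m → (l : ℕ) < m →
      ∑ i, ∑ k, P i j * P k l * AA i k = A j l) := by
  have h_nonneg : ∀ j, 0 ≤ h j := fun j => by rw [hpad j]; split_ifs <;> norm_num
  have h_eq_one : ∀ j : Fin M, (j : ℕ) < m → h j = 1 := fun j hj => by rw [hpad j, if_pos hj]
  simp only [mul_assoc, sum_sum_mul_of_perm hP, sum_sum_sum_sum_mul_mul_of_perm hP] at hobj
  rw [← Fintype.sum_prod_type'] at hobj
  have weight_nonneg : ∀ p : Fin M × Fin M, 0 ≤ h (σ p.1) * h (σ p.2) :=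
    fun p => mul_nonneg (h_nonneg _) (h_nonneg _)
  have nonneg_h : 0 ≤ ∑ i, ℓh (hh i) (h (σ i)) := Fintype.sum_nonneg fun i => (hℓh _ _).1
  have nonneg_F : 0 ≤ ∑ i, ℓF (FF i) (F (σ i)) * h (σ i) :=
    IsPositiveLoss.sum_mul_nonneg hℓF fun i => h_nonneg _
  have nonneg_A : 0 ≤ ∑ p : Fin M × Fin M, ℓA (AA p.1 p.2) (A (σ p.1) (σ p.2)) *
      (h (σ p.1) * h (σ p.2)) :=
    IsPositiveLoss.sum_mul_nonneg hℓA weight_nonneg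
  have zero_h : ∑ i, ℓh (hh i) (h (σ i)) = 0 := by linarith
  have zero_F : ∑ i, ℓF (FF i) (F (σ i)) * h (σ i) = 0 := by linarith
  have zero_A : ∑ p : Fin M × Fin M, ℓA (AA p.1 p.2) (A (σ p.1) (σ p.2)) *
      (h (σ p.1) * h (σ p.2)) = 0 := by linarith
  refine ⟨fun j => ?_, fun j hj t => ?_, fun j l hj hl => ?_⟩
  · rw [sum_col_mul_of_perm hP]
    simpa using congrFun (IsPositiveLoss.sum_eq_zero_iff hℓh |>.1 zero_h) (σ.symm j)
  · rw [sum_col_mul_of_perm hP j (FF · t)]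
    refine congrFun (IsPositiveLoss.eq_of_sum_mul_eq_zero hℓF (fun i => h_nonneg (σ i)) zero_F
      (k := σ.symm j) ?_) t |>.trans (by simp)
    simp [h_eq_one j hj]
  · rw [sum_sum_mul_mul_of_perm hP]
    refine (IsPositiveLoss.eq_of_sum_mul_eq_zero hℓA weight_nonneg zero_A
      (k := (σ.symm j, σ.symm l)) ?_).trans (by simp)
    simp [h_eq_one j hj, h_eq_one l hl]

/-- If a permutation matrix `P` (given by the permutation `σ`, `P i j = 1` iff `σ i = j`)
achieves zero PMFGW objective against a padded target `(h, F, A)` with positive ground losses,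
then `Pᵀĥ = h`, the first `m` rows of `PᵀF̂` equal those of `F`, and the top-left `m×m` block of
`PᵀÂP` equals that of `A`. -/
theorem perm_zero_objective_recovers_target {M d m : ℕ} (hm : m ≤ M)
    (ℓh : ℝ → ℝ → ℝ) (ℓF : (Fin d → ℝ) → (Fin d → ℝ) → ℝ) (ℓA : ℝ → ℝ → ℝ)
    (hℓh : ∀ x y, 0 ≤ ℓh x y ∧ (ℓh x y = 0 ↔ x = y))
    (hℓF : ∀ x y, 0 ≤ ℓF x y ∧ (ℓF x y = 0 ↔ x = y))
    (hℓA : ∀ x y, 0 ≤ ℓA x y ∧ (ℓA x y = 0 ↔ x = y))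
    -- prediction
    (hh : Fin M → ℝ) (FF : Fin M → Fin d → ℝ) (AA : Matrix (Fin M) (Fin M) ℝ)
    (hhh : ∀ i, hh i ∈ Set.Icc (0:ℝ) 1) (hAA : ∀ i k, AA i k ∈ Set.Icc (0:ℝ) 1)
    -- padded target
    (h : Fin M → ℝ) (F : Fin M → Fin d → ℝ) (A : Matrix (Fin M) (Fin M) ℝ)
    (hpad : ∀ j, h j = if (j : ℕ) < m then 1 else 0)
    -- the permutation matrix
    (σ : Equiv.Perm (Fin M))
    (P : Matrix (Fin M) (Fin M) ℝ) (hP : ∀ i j, P i j = if σ i = j then 1 else 0)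
    -- zero PMFGW objective at plan P
    (hobj : (∑ i, ∑ j, P i j * ℓh (hh i) (h j))
        + (∑ i, ∑ j, P i j * ℓF (FF i) (F j) * h j)
        + (∑ i, ∑ j, ∑ k, ∑ l, P i j * P k l * ℓA (AA i k) (A j l) * h j * h l) = 0) :
    (∀ j, ∑ i, P i j * hh i = h j) ∧
    (∀ j : Fin M, (j : ℕ) < m → ∀ t, ∑ i, P i j * FF i t = F j t) ∧
    (∀ j l : Fin M, (j : ℕ) < m → (l : ℕ) < m →
      ∑ i, ∑ k, P i j * P k l * AA i k = A j l) :=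
  perm_zero_objective_recovers_target_general ℓh ℓF ℓA hℓh hℓF hℓA hh FF AA h F A hpad σ P hP hobj
end
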